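/- For any odd prime p, ∑_{k=0}^{p-1} ((-1)^k / 8^k) · ∑_{j=0}^{k} C(2j,j)·C(2k-2j,k-j)·(6j+1)·(6k-6j+1) ≡ -p/2 (mod p²). -/

import Mathlib

/-!
Writing `C i` for the central binomial coefficient, `(i + 1) C (i + 1) = 2 (2i + 1) C i` gives
the convolutions `∑_{i+j=k} C i C j = 4^k` and `∑_{i+j=k} i j C i C j = k (k - 1) 4^k / 8`
(the generating function `(1 - 4x)^(-1/2)` squares to `(1 - 4x)^(-1)`). As
`(6i + 1)(6j + 1) = 36 i j + 6k + 1` on `i + j = k`, the inner sum is `4^k (9k² + 3k + 2) / 2`,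
and the outer sum telescopes to `(-1/2)^n (n - 3n²)`. For `n = p` this differs from `-p/2` by
`p (2^(p-1) - 1 + 3p) / 2^p`, which is divisible by `p²` by Fermat's little theorem.
-/

open Finset

namespace Nat

section CommSemiring

variable {R : Type*} [CommSemiring R]

lemma sum_antidiagonal_succ_fst_mul_centralBinom (n : ℕ) (g : ℕ × ℕ → R) :
    ∑ x ∈ antidiagonal (n + 1), (x.1 : R) * x.1.centralBinom * g x
      = ∑ x ∈ antidiagonal n, 2 * (2 * x.1 + 1) * x.1.centralBinom * g (x.1 + 1, x.2) := by
  rw [Finset.Nat.sum_antidiagonal_succ]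
  simp only [cast_zero, zero_mul, zero_add]
  refine sum_congr rfl fun x _ => ?_
  have h := congrArg (Nat.cast : ℕ → R) (succ_mul_centralBinom_succ x.1)
  push_cast at h ⊢
  rw [h]

lemma two_mul_sum_antidiagonal_fst_mul_centralBinom (n : ℕ) :
    2 * ∑ x ∈ antidiagonal n, (x.1 : R) * x.1.centralBinom * x.2.centralBinom
      = n * ∑ x ∈ antidiagonal n, (x.1.centralBinom * x.2.centralBinom : R) := by
  rw [two_mul]
  nth_rw 1 [← Finset.Nat.sum_antidiagonal_swap]
  rw [← sum_add_distrib, mul_sum]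
  refine sum_congr rfl fun x hx => ?_
  rw [← mem_antidiagonal.mp hx]
  simp only [Prod.fst_swap, Prod.snd_swap]
  push_cast
  ring

end CommSemiring

theorem sum_antidiagonal_centralBinom_mul (n : ℕ) :
    ∑ x ∈ antidiagonal n, x.1.centralBinom * x.2.centralBinom = 4 ^ n := by
  induction n with
  | zero => simp
  | succ n ih =>
    have h := two_mul_sum_antidiagonal_fst_mul_centralBinom (R := ℕ) (n + 1)
    have h' := two_mul_sum_antidiagonal_fst_mul_centralBinom (R := ℕ) n
    rw [sum_antidiagonal_succ_fst_mul_centralBinom] at h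
    simp only [cast_id] at h h'
    have split : ∑ x ∈ antidiagonal n, 2 * (2 * x.1 + 1) * x.1.centralBinom * x.2.centralBinom
        = 2 * (2 * ∑ x ∈ antidiagonal n, x.1 * x.1.centralBinom * x.2.centralBinom)
          + 2 * ∑ x ∈ antidiagonal n, x.1.centralBinom * x.2.centralBinom := by
      simp only [mul_sum, ← sum_add_distrib]
      exact sum_congr rfl fun _ _ => by ring
    rw [split, h', ih] at h
    refine mul_left_cancel₀ n.succ_ne_zero ?_
    rw [succ_eq_add_one, ← h]
    ring

section CommRing

variable {R : Type*} [CommRing R]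

theorem eight_mul_sum_antidiagonal_mul_centralBinom_mul (n : ℕ) :
    8 * ∑ x ∈ antidiagonal n, (x.1 * x.1.centralBinom : R) * (x.2 * x.2.centralBinom)
      = n * (n - 1) * 4 ^ n := by
  induction n with
  | zero => simp
  | succ n ih =>
    have hsnd : 2 * ∑ x ∈ antidiagonal n, (x.2 : R) * x.1.centralBinom * x.2.centralBinom
        = n * 4 ^ n := by
      rw [← Finset.Nat.sum_antidiagonal_swap]
      calc 2 * ∑ x ∈ antidiagonal n, (x.1 : R) * x.2.centralBinom * x.1.centralBinom
          = 2 * ∑ x ∈ antidiagonal n, (x.1 : R) * x.1.centralBinom * x.2.centralBinom := by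
            simp only [mul_right_comm]
        _ = n * 4 ^ n := by
            have hS := congrArg (Nat.cast : ℕ → R) (sum_antidiagonal_centralBinom_mul n)
            push_cast at hS
            rw [two_mul_sum_antidiagonal_fst_mul_centralBinom, hS]
    rw [sum_antidiagonal_succ_fst_mul_centralBinom]
    have split : ∑ x ∈ antidiagonal n,
          2 * (2 * (x.1 : R) + 1) * x.1.centralBinom * ((x.2 : R) * x.2.centralBinom)
        = 4 * ∑ x ∈ antidiagonal n, (x.1 * x.1.centralBinom : R) * (x.2 * x.2.centralBinom)
          + 2 * ∑ x ∈ antidiagonal n, (x.2 : R) * x.1.centralBinom * x.2.centralBinom := by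
      simp only [mul_sum, ← sum_add_distrib]
      exact sum_congr rfl fun _ _ => by ring
    rw [split]
    push_cast
    linear_combination 4 * ih + 8 * hsnd

theorem two_mul_sum_antidiagonal_centralBinom_mul_six_mul_add_one (n : ℕ) :
    2 * ∑ x ∈ antidiagonal n, (x.1.centralBinom * x.2.centralBinom : R)
        * (6 * x.1 + 1) * (6 * x.2 + 1)
      = (9 * n ^ 2 + 3 * n + 2) * 4 ^ n := by
  have hT := eight_mul_sum_antidiagonal_mul_centralBinom_mul (R := R) n
  have hS := congrArg (Nat.cast : ℕ → R) (sum_antidiagonal_centralBinom_mul n)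
  push_cast at hS
  have split : ∑ x ∈ antidiagonal n, (x.1.centralBinom * x.2.centralBinom : R)
        * (6 * x.1 + 1) * (6 * x.2 + 1)
      = 36 * ∑ x ∈ antidiagonal n, (x.1 * x.1.centralBinom : R) * (x.2 * x.2.centralBinom)
        + (6 * n + 1) * ∑ x ∈ antidiagonal n, (x.1.centralBinom * x.2.centralBinom : R) := by
    simp only [mul_sum, ← sum_add_distrib]
    refine sum_congr rfl fun x hx => ?_
    rw [← mem_antidiagonal.mp hx]
    push_cast
    ring
  rw [split, hS]
  linear_combination 9 * hT

end CommRing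

end Nat

theorem two_mul_sum_range_choose_mul_six_mul_add_one {R : Type*} [CommRing R] (k : ℕ) :
    2 * ∑ j ∈ range (k + 1), (((2 * j).choose j : R) * ((2 * (k - j)).choose (k - j) : R) *
        ((6 * j + 1 : ℕ) : R) * ((6 * (k - j) + 1 : ℕ) : R))
      = (9 * k ^ 2 + 3 * k + 2) * 4 ^ k := by
  rw [← Nat.two_mul_sum_antidiagonal_centralBinom_mul_six_mul_add_one,
    Finset.Nat.sum_antidiagonal_eq_sum_range_succ_mk]
  simp only [Nat.centralBinom_eq_two_mul_choose]
  push_cast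
  rfl

section Field

variable {F : Type*} [Field F] [NeZero (2 : F)]

lemma sum_range_neg_inv_two_pow_mul (n : ℕ) :
    ∑ k ∈ range n, (-2⁻¹ : F) ^ k * (9 * (k : F) ^ 2 + 3 * k + 2)
      = 2 * (-2⁻¹ : F) ^ n * ((n : F) - 3 * n ^ 2) := by
  have hx : 2 * (-2⁻¹ : F) = -1 := by rw [mul_neg, mul_inv_cancel₀ two_ne_zero]
  induction n with
  | zero => simp
  | succ n ih =>
    rw [sum_range_succ, ih, pow_succ]
    push_cast
    linear_combination (-2⁻¹ : F) ^ n * (3 * n ^ 2 + 5 * n + 2) * hx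

theorem sum_range_neg_one_pow_div_eight_pow_mul_sum_choose (n : ℕ) :
    ∑ k ∈ range n, ((-1) ^ k / 8 ^ k : F) *
        ∑ j ∈ range (k + 1),
          (((2 * j).choose j : F) * ((2 * (k - j)).choose (k - j) : F) *
            ((6 * j + 1 : ℕ) : F) * ((6 * (k - j) + 1 : ℕ) : F))
      = (-2⁻¹) ^ n * (n - 3 * n ^ 2) := by
  have hterm (k : ℕ) (S : F) (hS : 2 * S = (9 * k ^ 2 + 3 * k + 2) * 4 ^ k) :
      (-1) ^ k / 8 ^ k * S = (-2⁻¹) ^ k * (9 * k ^ 2 + 3 * k + 2) / 2 := by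
    have h4 : (4 : F) ≠ 0 := by
      rw [show (4 : F) = 2 * 2 by norm_num]
      exact mul_ne_zero two_ne_zero two_ne_zero
    rw [neg_pow (2⁻¹ : F), inv_pow, show (8 : F) ^ k = 2 ^ k * 4 ^ k by rw [← mul_pow]; norm_num]
    field_simp
    linear_combination hS
  rw [sum_congr rfl fun k _ => hterm k _ (two_mul_sum_range_choose_mul_six_mul_add_one k),
    ← sum_div, sum_range_neg_inv_two_pow_mul, mul_assoc, mul_div_cancel_left₀ _ two_ne_zero]

lemma neg_inv_two_pow_mul_sub_neg_div_two {n : ℕ} (hn : Odd n) :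
    (-2⁻¹ : F) ^ n * (n - 3 * n ^ 2) - -n / 2
      = n * ((2 ^ (n - 1) - 1 + 3 * n : ℤ) : F) / 2 ^ n := by
  have hpow : (2 : F) ^ n = 2 ^ (n - 1) * 2 := by rw [← pow_succ, Nat.sub_add_cancel hn.pos]
  have h2 : (2 : F) ≠ 0 := two_ne_zero
  rw [hn.neg_pow, inv_pow, hpow]
  push_cast
  field_simp
  ring

end Field

namespace Padic

variable {p : ℕ} [Fact p.Prime]

lemma norm_two_of_odd (hp : Odd p) : ‖(2 : ℚ_[p])‖ = 1 := by
  exact_mod_cast norm_natCast_eq_one_iff.mpr (Nat.coprime_two_right.mpr hp)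

lemma norm_intCast_le_inv_of_dvd {z : ℤ} (h : (p : ℤ) ∣ z) : ‖(z : ℚ_[p])‖ ≤ (p : ℝ)⁻¹ := by
  have h' := (norm_int_le_pow_iff_dvd (p := p) z 1).mpr (by rwa [pow_one])
  rwa [Nat.cast_one, zpow_neg_one] at h'

end Padic

theorem stmt16 (p : ℕ) [Fact p.Prime] (hodd : Odd p) :
    ‖(∑ k ∈ range p, ((-1) ^ k / 8 ^ k : ℚ_[p]) *
        ∑ j ∈ range (k + 1),
          (((2 * j).choose j : ℚ_[p]) * ((2 * (k - j)).choose (k - j) : ℚ_[p]) *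
            ((6 * j + 1 : ℕ) : ℚ_[p]) * ((6 * (k - j) + 1 : ℕ) : ℚ_[p]))) -
      (-(p : ℚ_[p]) / 2)‖ ≤ ((p : ℝ) ^ 2)⁻¹ := by
  have hcop : IsCoprime (2 : ℤ) p := by
    exact_mod_cast Nat.isCoprime_iff_coprime.mpr (Nat.coprime_two_left.mpr hodd)
  have hdvd : (p : ℤ) ∣ 2 ^ (p - 1) - 1 + 3 * p :=
    (Int.prime_dvd_pow_sub_one Fact.out hcop).add (dvd_mul_left _ _)
  rw [sum_range_neg_one_pow_div_eight_pow_mul_sum_choose, neg_inv_two_pow_mul_sub_neg_div_two hodd,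
    norm_div, norm_mul, norm_pow, Padic.norm_p, Padic.norm_two_of_odd hodd, one_pow, div_one, sq,
    mul_inv]
  gcongr
  exact Padic.norm_intCast_le_inv_of_dvd hdvd
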